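/- Let x solve ẋ(t) = A x(t) + B_u u(t-h) + B_ω ω(t) with u piecewise constant on [t-h, t+T-h] taking values u_0, ..., u_N on consecutive intervals separated by times t_1 < ... < t_N, and ω (r+1)-times continuously differentiable. Then x(t+T) = e^{AT} x(t) + Γ_u-terms + Σ_{i=0}^r (T^{i+1}/(i+1)!) Γ_{ω,i}(T) B_ω ω^{(i)}(t) + O_r(t), where the Γ_u-terms are Γ_u(t, t_1+h) u_0 + Σ_{k=1}^{N-1} Γ_u(t_k+h, t_{k+1}+h) u_k + Γ_u(t_N+h, t+T) u_N with Γ_u(α,β) = ∫_α^β e^{A(t+T-s)} B_u ds. -/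

import Mathlib

/-!
Variation of constants writes `x (t + T)` as `exp (T • A) (x t)` plus the integral of
`exp ((t + T - s) • A)` against the forcing term. The delayed input is constant between
consecutive jumps, so its integral splits into the `Γ_u` terms. For the disturbance, the iterated
antiderivatives `expAntideriv A k τ = ∑ τ^(k+j)/(k+j)! A^j` of `τ ↦ exp (τ • A)` satisfy
`(expAntideriv A (k + 1))' = expAntideriv A k` and vanish at `0` for `k ≥ 1`, so `r + 1`
integrations by parts against `ω` produce the Taylor-type terms and the remainder `O_r(t)`, since
`expAntideriv A (i + 1) τ = (τ ^ (i + 1) / (i + 1)!) Γ_{ω,i}(τ)`. Matrices are turned into operators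
on `Fin n → ℝ`, where a Banach algebra norm is available.
-/

open MeasureTheory Matrix

/-- The matrix series `Γ_{ω,i}(τ) = Σ_{j=0}^∞ ((i+1)!/(i+1+j)!) A^j τ^j`. -/
noncomputable def Gam {n : ℕ} (A : Matrix (Fin n) (Fin n) ℝ) (i : ℕ) (τ : ℝ) :
    Matrix (Fin n) (Fin n) ℝ :=
  ∑' j : ℕ, (((i + 1).factorial : ℝ) / ((i + 1 + j).factorial) * τ ^ j) • A ^ j

open NormedSpace

section ExpAntideriv

open Nat

theorem hasDerivAt_pow_succ_div_factorial (m : ℕ) (σ : ℝ) :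
    HasDerivAt (fun y : ℝ => y ^ (m + 1) / (m + 1)!) (σ ^ m / m !) σ := by
  refine ((hasDerivAt_pow (m + 1) σ).div_const ((m + 1)! : ℝ)).congr_deriv ?_
  rw [Nat.factorial_succ, Nat.cast_mul, add_tsub_cancel_right]
  field_simp

variable {𝔸 : Type*} [NormedRing 𝔸] [NormedAlgebra ℝ 𝔸]

noncomputable def expAntideriv (a : 𝔸) (k : ℕ) (τ : ℝ) : 𝔸 :=
  ∑' j : ℕ, (τ ^ (k + j) / (k + j)! : ℝ) • a ^ j

theorem norm_expAntideriv_term_le (a : 𝔸) (k j : ℕ) {σ R : ℝ} (hσ : |σ| ≤ R) :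
    ‖(σ ^ (k + j) / (k + j)! : ℝ) • a ^ j‖ ≤ R ^ k * ‖((j ! : ℝ)⁻¹) • (R • a) ^ j‖ := by
  have hR : 0 ≤ R := (abs_nonneg σ).trans hσ
  have hfact : (j ! : ℝ) ≤ (k + j)! := by exact_mod_cast Nat.factorial_le (Nat.le_add_left j k)
  rw [smul_pow, smul_smul, norm_smul, norm_smul, Real.norm_eq_abs, Real.norm_eq_abs, abs_div,
    abs_pow, Nat.abs_cast, abs_mul, abs_inv, Nat.abs_cast, abs_pow, abs_of_nonneg hR, pow_add]
  calc |σ| ^ k * |σ| ^ j / ((k + j)! : ℝ) * ‖a ^ j‖ ≤ R ^ k * R ^ j / (j ! : ℝ) * ‖a ^ j‖ := by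
        gcongr
    _ = R ^ k * ((j ! : ℝ)⁻¹ * R ^ j * ‖a ^ j‖) := by ring

theorem expAntideriv_zero (a : 𝔸) (τ : ℝ) : expAntideriv a 0 τ = exp (τ • a) := by
  rw [exp_eq_tsum ℝ, expAntideriv]
  refine tsum_congr fun j => ?_
  rw [smul_pow, smul_smul, zero_add, div_eq_inv_mul]

theorem expAntideriv_succ_at_zero (a : 𝔸) (k : ℕ) : expAntideriv a (k + 1) 0 = 0 := by
  simp [expAntideriv]

theorem hasDerivAt_expAntideriv_succ [CompleteSpace 𝔸] (a : 𝔸) (k : ℕ) (τ : ℝ) :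
    HasDerivAt (expAntideriv a (k + 1)) (expAntideriv a k τ) τ := by
  have hτ : τ ∈ Metric.ball (0 : ℝ) (|τ| + 1) := by simp
  refine hasDerivAt_tsum_of_isPreconnected
    (g := fun j σ => (σ ^ (k + 1 + j) / (k + 1 + j)! : ℝ) • a ^ j)
    (g' := fun j σ => (σ ^ (k + j) / (k + j)! : ℝ) • a ^ j)
    ((norm_expSeries_summable' (𝕂 := ℝ) ((|τ| + 1) • a)).mul_left ((|τ| + 1) ^ k))
    Metric.isOpen_ball (convex_ball _ _).isPreconnected (fun j σ _ => ?_) (fun j σ hσ => ?_)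
    (Metric.mem_ball_self (by positivity)) ?_ hτ
  · rw [Nat.add_right_comm]
    exact (hasDerivAt_pow_succ_div_factorial (k + j) σ).smul_const (a ^ j)
  · exact norm_expAntideriv_term_le a k j (by simpa using (mem_ball_zero_iff.mp hσ).le)
  · simp

theorem continuous_exp_smul [CompleteSpace 𝔸] (a : 𝔸) : Continuous fun τ : ℝ => exp (τ • a) :=
  continuous_iff_continuousAt.2 fun τ => (hasDerivAt_exp_smul_const a τ).continuousAt

theorem continuous_expAntideriv [CompleteSpace 𝔸] (a : 𝔸) : ∀ k, Continuous (expAntideriv a k)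
  | 0 => by simpa only [← expAntideriv_zero] using continuous_exp_smul a
  | k + 1 =>
    continuous_iff_continuousAt.2 fun τ => (hasDerivAt_expAntideriv_succ a k τ).continuousAt

end ExpAntideriv

section MatrixAsOperator

open Nat

variable {ι : Type*} [Fintype ι] [DecidableEq ι]

noncomputable def Matrix.toContinuousLinearAlgEquiv :
    Matrix ι ι ℝ ≃A[ℝ] ((ι → ℝ) →L[ℝ] (ι → ℝ)) where
  toAlgEquiv := AlgEquiv.ofLinearEquiv (Matrix.toLin'.trans LinearMap.toContinuousLinearMap)
    (by ext; simp) fun M N => by ext; simp [Matrix.mulVec_mulVec]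
  continuous_toFun := LinearMap.continuous_of_finiteDimensional _
  continuous_invFun := LinearMap.continuous_of_finiteDimensional _

@[simp]
theorem Matrix.toContinuousLinearAlgEquiv_apply (M : Matrix ι ι ℝ) (v : ι → ℝ) :
    Matrix.toContinuousLinearAlgEquiv M v = M *ᵥ v :=
  rfl

theorem Matrix.toContinuousLinearAlgEquiv_tsum (f : ℕ → Matrix ι ι ℝ) :
    Matrix.toContinuousLinearAlgEquiv (∑' j, f j) = ∑' j, Matrix.toContinuousLinearAlgEquiv (f j) :=
  Matrix.toContinuousLinearAlgEquiv.toContinuousLinearEquiv.map_tsum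

theorem Matrix.toContinuousLinearAlgEquiv_exp (M : Matrix ι ι ℝ) :
    Matrix.toContinuousLinearAlgEquiv (exp M) = exp (Matrix.toContinuousLinearAlgEquiv M) := by
  rw [exp_eq_tsum ℝ, exp_eq_tsum ℝ, Matrix.toContinuousLinearAlgEquiv_tsum]
  simp_rw [map_smul, map_pow]

theorem Matrix.exp_mulVec (M : Matrix ι ι ℝ) (v : ι → ℝ) :
    exp M *ᵥ v = exp (Matrix.toContinuousLinearAlgEquiv M) v := by
  rw [← Matrix.toContinuousLinearAlgEquiv_exp, Matrix.toContinuousLinearAlgEquiv_apply]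

theorem smul_Gam_mulVec {n : ℕ} (A : Matrix (Fin n) (Fin n) ℝ) (i : ℕ) (τ : ℝ) (v : Fin n → ℝ) :
    (τ ^ (i + 1) / (i + 1)! : ℝ) • (Gam A i τ *ᵥ v) =
      expAntideriv (Matrix.toContinuousLinearAlgEquiv A) (i + 1) τ v := by
  rw [← smul_mulVec, ← Matrix.toContinuousLinearAlgEquiv_apply, Gam, ← tsum_const_smul'',
    Matrix.toContinuousLinearAlgEquiv_tsum, expAntideriv]
  congr 1
  refine tsum_congr fun j => ?_
  rw [smul_smul, map_smul, map_pow]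
  congr 1
  field_simp
  ring

end MatrixAsOperator

section LinearODE

variable {E : Type*} [NormedAddCommGroup E] [NormedSpace ℝ E] [CompleteSpace E] (L : E →L[ℝ] E)

theorem hasDerivAt_exp_smul_sub_apply {x : ℝ → E} {x' : E} {b s : ℝ} (hx : HasDerivAt x x' s) :
    HasDerivAt (fun σ => exp ((b - σ) • L) (x σ)) (exp ((b - s) • L) (x' - L (x s))) s := by
  have hexp : HasDerivAt (fun σ => exp ((b - σ) • L)) (-(exp ((b - s) • L) * L)) s := by
    simpa [Function.comp_def] using
      (hasDerivAt_exp_smul_const L (b - s)).scomp s ((hasDerivAt_id s).const_sub b)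
  convert hexp.clm_apply hx using 1
  simp [sub_eq_add_neg, add_comm]

theorem variation_of_constants {x g : ℝ → E} {a b : ℝ}
    (hx : ∀ s ∈ Set.uIcc a b, HasDerivAt x (L (x s) + g s) s)
    (hg : IntervalIntegrable (fun s => exp ((b - s) • L) (g s)) volume a b) :
    x b = exp ((b - a) • L) (x a) + ∫ s in a..b, exp ((b - s) • L) (g s) := by
  have hftc := intervalIntegral.integral_eq_sub_of_hasDerivAt
    (fun s hs => by simpa using hasDerivAt_exp_smul_sub_apply L (b := b) (hx s hs)) hg
  rw [hftc, sub_self, zero_smul, exp_zero, one_apply_eq_self]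
  abel

theorem integral_expAntideriv_apply_eq (i : ℕ) {v v' : ℝ → E} {a b : ℝ}
    (hv : ∀ s ∈ Set.uIcc a b, HasDerivAt v (v' s) s) (hv' : ContinuousOn v' (Set.uIcc a b)) :
    ∫ s in a..b, expAntideriv L i (b - s) (v s) =
      expAntideriv L (i + 1) (b - a) (v a) +
        ∫ s in a..b, expAntideriv L (i + 1) (b - s) (v' s) := by
  have hG : ∀ j, Continuous fun s => expAntideriv L j (b - s) :=
    fun j => (continuous_expAntideriv L j).comp (continuous_sub_left b)
  have hv_cont : ContinuousOn v (Set.uIcc a b) :=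
    fun s hs => (hv s hs).continuousAt.continuousWithinAt
  have hderiv : ∀ s ∈ Set.uIcc a b, HasDerivAt (fun σ => expAntideriv L (i + 1) (b - σ) (v σ))
      (expAntideriv L (i + 1) (b - s) (v' s) - expAntideriv L i (b - s) (v s)) s := by
    intro s hs
    have hG' : HasDerivAt (fun σ => expAntideriv L (i + 1) (b - σ))
        (-expAntideriv L i (b - s)) s := by
      simpa [Function.comp_def] using
        (hasDerivAt_expAntideriv_succ L i (b - s)).scomp s ((hasDerivAt_id s).const_sub b)
    refine (hG'.clm_apply (hv s hs)).congr_deriv ?_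
    rw [_root_.neg_apply]
    abel
  have hint : ∀ j w, ContinuousOn w (Set.uIcc a b) →
      IntervalIntegrable (fun s => expAntideriv L j (b - s) (w s)) volume a b :=
    fun j w hw => ((hG j).continuousOn.clm_apply hw).intervalIntegrable
  have hftc := intervalIntegral.integral_eq_sub_of_hasDerivAt hderiv
    ((hint _ _ hv').sub (hint _ _ hv_cont))
  rw [intervalIntegral.integral_sub (hint _ _ hv') (hint _ _ hv_cont), sub_self,
    expAntideriv_succ_at_zero, _root_.zero_apply, zero_sub] at hftc
  rw [sub_eq_iff_eq_add.mp hftc]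
  abel

variable {F : Type*} [NormedAddCommGroup F] [NormedSpace ℝ F] (B : F →L[ℝ] E)

theorem integral_expAntideriv_zero_eq_taylor {ω : ℝ → F} (a b : ℝ) :
    ∀ {r : ℕ}, ContDiff ℝ r ω →
      ∫ s in a..b, expAntideriv L 0 (b - s) (B (ω s)) =
        ∑ i ∈ Finset.range r, expAntideriv L (i + 1) (b - a) (B (iteratedDeriv i ω a)) +
          ∫ s in a..b, expAntideriv L r (b - s) (B (iteratedDeriv r ω s))
  | 0, _ => by simp
  | r + 1, hω => by
    have hderiv : ∀ s, HasDerivAt (iteratedDeriv r ω) (iteratedDeriv (r + 1) ω s) s := by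
      intro s
      rw [iteratedDeriv_succ]
      exact (hω.differentiable_iteratedDeriv r (by exact_mod_cast Nat.lt_succ_self r) s).hasDerivAt
    rw [integral_expAntideriv_zero_eq_taylor a b (hω.of_le (by exact_mod_cast Nat.le_succ r)),
      integral_expAntideriv_apply_eq L r (v := fun s => B (iteratedDeriv r ω s))
        (fun s _ => B.hasFDerivAt.comp_hasDerivAt s (hderiv s))
        (B.continuous.comp (hω.continuous_iteratedDeriv (r + 1) le_rfl)).continuousOn,
      Finset.sum_range_succ]
    abel

theorem integral_exp_smul_apply_eq_taylor {r : ℕ} {ω : ℝ → F} (hω : ContDiff ℝ r ω) (a b : ℝ) :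
    ∫ s in a..b, exp ((b - s) • L) (B (ω s)) =
      ∑ i ∈ Finset.range r, expAntideriv L (i + 1) (b - a) (B (iteratedDeriv i ω a)) +
        ∫ s in a..b, expAntideriv L r (b - s) (B (iteratedDeriv r ω s)) := by
  simpa only [expAntideriv_zero] using integral_expAntideriv_zero_eq_taylor L B a b hω

end LinearODE

section Piecewise

theorem exists_nat_extension {α : Type*} {N : ℕ} (a : Fin (N + 2) → α) :
    ∃ a' : ℕ → α, a' 0 = a 0 ∧ a' (N + 1) = a (Fin.last _) ∧
      ∀ k : Fin (N + 1), a' k = a k.castSucc ∧ a' (k + 1) = a k.succ :=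
  ⟨fun k => a (Fin.clamp k (N + 1)), rfl, by simp [Fin.clamp, Fin.last],
    fun k => ⟨congrArg a (Fin.ext (by simp [Fin.clamp])),
      congrArg a (Fin.ext (by simp [Fin.clamp]; omega))⟩⟩

theorem ae_restrict_uIoc_eq_of_eqOn_Ico {X : Type*} {f g : ℝ → X} {α β : ℝ} (hαβ : α ≤ β)
    (hfg : Set.EqOn f g (Set.Ico α β)) : ∀ᵐ s, s ∈ Set.uIoc α β → f s = g s := by
  filter_upwards [measure_eq_zero_iff_ae_notMem.mp (measure_singleton β)] with s hsβ hs
  rw [Set.uIoc_of_le hαβ] at hs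
  exact hfg ⟨hs.1.le, lt_of_le_of_ne hs.2 hsβ⟩

variable {E : Type*} [NormedAddCommGroup E] {f : ℝ → E}

theorem IntervalIntegrable.of_eqOn_Ico {g : ℝ → E} {α β : ℝ} (hαβ : α ≤ β)
    (hg : IntervalIntegrable g volume α β) (hfg : Set.EqOn f g (Set.Ico α β)) :
    IntervalIntegrable f volume α β :=
  hg.congr_ae <| (ae_restrict_iff' measurableSet_uIoc).2 <|
    ae_restrict_uIoc_eq_of_eqOn_Ico hαβ hfg.symm

variable {N : ℕ} {a : Fin (N + 2) → ℝ}

theorem Fin.intervalIntegrable_trans_iterate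
    (hf : ∀ k : Fin (N + 1), IntervalIntegrable f volume (a k.castSucc) (a k.succ)) :
    IntervalIntegrable f volume (a 0) (a (Fin.last _)) := by
  obtain ⟨a', h0, hlast, hk⟩ := exists_nat_extension a
  rw [← h0, ← hlast]
  refine IntervalIntegrable.trans_iterate fun k hk' => ?_
  obtain ⟨h1, h2⟩ := hk ⟨k, hk'⟩
  simpa [h1, h2] using hf ⟨k, hk'⟩

theorem Fin.sum_integral_adjacent_intervals [NormedSpace ℝ E]
    (hf : ∀ k : Fin (N + 1), IntervalIntegrable f volume (a k.castSucc) (a k.succ)) :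
    ∑ k : Fin (N + 1), ∫ s in a k.castSucc..a k.succ, f s = ∫ s in a 0..a (Fin.last _), f s := by
  obtain ⟨a', h0, hlast, hk⟩ := exists_nat_extension a
  rw [← h0, ← hlast, ← intervalIntegral.sum_integral_adjacent_intervals fun k hk' => ?_,
    ← Fin.sum_univ_eq_sum_range (fun k => ∫ s in a' k..a' (k + 1), f s)]
  · exact Finset.sum_congr rfl fun k _ => by rw [(hk k).1, (hk k).2]
  · obtain ⟨h1, h2⟩ := hk ⟨k, hk'⟩
    simpa [h1, h2] using hf ⟨k, hk'⟩

variable {g : Fin (N + 1) → ℝ → E}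

theorem intervalIntegrable_of_eqOn_Ico (ha : Monotone a)
    (hg : ∀ k : Fin (N + 1), IntervalIntegrable (g k) volume (a k.castSucc) (a k.succ))
    (hfg : ∀ k : Fin (N + 1), Set.EqOn f (g k) (Set.Ico (a k.castSucc) (a k.succ))) :
    IntervalIntegrable f volume (a 0) (a (Fin.last _)) :=
  Fin.intervalIntegrable_trans_iterate fun k =>
    .of_eqOn_Ico (ha k.castSucc_le_succ) (hg k) (hfg k)

theorem integral_eq_sum_of_eqOn_Ico [NormedSpace ℝ E] (ha : Monotone a)
    (hg : ∀ k : Fin (N + 1), IntervalIntegrable (g k) volume (a k.castSucc) (a k.succ))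
    (hfg : ∀ k : Fin (N + 1), Set.EqOn f (g k) (Set.Ico (a k.castSucc) (a k.succ))) :
    ∫ s in a 0..a (Fin.last _), f s = ∑ k, ∫ s in a k.castSucc..a k.succ, g k s := by
  rw [← Fin.sum_integral_adjacent_intervals fun k =>
    .of_eqOn_Ico (ha k.castSucc_le_succ) (hg k) (hfg k)]
  exact Finset.sum_congr rfl fun k _ => intervalIntegral.integral_congr_ae <|
    ae_restrict_uIoc_eq_of_eqOn_Ico (ha k.castSucc_le_succ) (hfg k)

end Piecewise

theorem stmt7_general {n m q r N : ℕ} (A : Matrix (Fin n) (Fin n) ℝ)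
    (Bu : Matrix (Fin n) (Fin m) ℝ) (Bω : Matrix (Fin n) (Fin q) ℝ)
    (x : ℝ → Fin n → ℝ) (u : ℝ → Fin m → ℝ) (ω : ℝ → Fin q → ℝ)
    (hω : ContDiff ℝ (r + 1) ω) (h t T : ℝ)
    (hx : ∀ s : ℝ,
      HasDerivAt x (A.mulVec (x s) + Bu.mulVec (u (s - h)) + Bω.mulVec (ω s)) s)
    (τ : Fin (N + 2) → ℝ) (hτ0 : τ 0 = t - h) (hτN : τ (Fin.last (N + 1)) = t + T - h)
    (hτmono : StrictMono τ)
    (uv : Fin (N + 1) → Fin m → ℝ)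
    (hu : ∀ k : Fin (N + 1), ∀ φ : ℝ, τ k.castSucc ≤ φ → φ < τ k.succ → u φ = uv k) :
    x (t + T) =
      (NormedSpace.exp (T • A)).mulVec (x t)
        + (∑ k : Fin (N + 1),
            ∫ s in (τ k.castSucc + h)..(τ k.succ + h),
              (NormedSpace.exp ((t + T - s) • A) * Bu).mulVec (uv k))
        + (∑ i ∈ Finset.range (r + 1),
            (T ^ (i + 1) / (i + 1).factorial : ℝ) •
              (Gam A i T * Bω).mulVec (iteratedDeriv i ω t))
        + ∫ s in t..(t + T),
            ((t + T - s) ^ (r + 1) / (r + 1).factorial : ℝ) •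
              (Gam A r (t + T - s) * Bω).mulVec (iteratedDeriv (r + 1) ω s) := by
  set L := Matrix.toContinuousLinearAlgEquiv A
  set Bω' : (Fin q → ℝ) →L[ℝ] (Fin n → ℝ) := LinearMap.toContinuousLinearMap Bω.mulVecLin
  obtain ⟨hstart, hend⟩ : τ 0 + h = t ∧ τ (Fin.last (N + 1)) + h = t + T :=
    ⟨by linarith, by linarith⟩
  have hint : ∀ v : ℝ → Fin n → ℝ, Continuous v → ∀ α β,
      IntervalIntegrable (fun s => exp ((t + T - s) • L) (v s)) volume α β :=
    fun v hv α β =>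
      (((continuous_exp_smul L).comp (continuous_sub_left _)).clm_apply hv).intervalIntegrable α β
  have hpiece : ∀ k : Fin (N + 1), Set.EqOn (fun s => exp ((t + T - s) • L) (Bu *ᵥ u (s - h)))
      (fun s => exp ((t + T - s) • L) (Bu *ᵥ uv k)) (Set.Ico (τ k.castSucc + h) (τ k.succ + h)) :=
    fun k s hs => by simp only [hu k (s - h) (by linarith [hs.1]) (by linarith [hs.2])]
  have hmono : Monotone fun k => τ k + h := hτmono.monotone.add_const h
  have hu_int := intervalIntegrable_of_eqOn_Ico hmono (fun k => hint _ continuous_const _ _) hpiece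
  have hu_sum := integral_eq_sum_of_eqOn_Ico hmono (fun k => hint _ continuous_const _ _) hpiece
  simp only [hstart, hend] at hu_int hu_sum
  have hω_int := hint (fun s => Bω' (ω s)) (Bω'.continuous.comp hω.continuous) t (t + T)
  have hvoc := variation_of_constants L (g := fun s => Bu *ᵥ u (s - h) + Bω' (ω s))
    (fun s _ => by rw [← add_assoc]; exact hx s) (by simpa only [map_add] using hu_int.add hω_int)
  have htaylor := integral_exp_smul_apply_eq_taylor L Bω' (by exact_mod_cast hω) t (t + T)
  simp only [map_add] at hvoc
  rw [intervalIntegral.integral_add hu_int hω_int, hu_sum, htaylor, add_sub_cancel_left] at hvoc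
  simp_rw [← mulVec_mulVec, Matrix.exp_mulVec, map_smul, smul_Gam_mulVec]
  rw [hvoc, add_assoc, add_assoc]
  rfl

/-- Exact representation of the future state (Eq. (6) of the paper): the jumping instants of the
piecewise-constant delayed input are `τ 1 < … < τ N` (with `τ 0 = t - h`, `τ (N+1) = t + T - h`
as artificial endpoints), and the value on the `k`-th subinterval is `uv k`. -/
theorem stmt7 {n m q r N : ℕ} (A : Matrix (Fin n) (Fin n) ℝ)
    (Bu : Matrix (Fin n) (Fin m) ℝ) (Bω : Matrix (Fin n) (Fin q) ℝ)
    (x : ℝ → Fin n → ℝ) (u : ℝ → Fin m → ℝ) (ω : ℝ → Fin q → ℝ)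
    (hω : ContDiff ℝ (r + 1) ω) (h t T : ℝ) (hh : 0 ≤ h) (hT : 0 ≤ T)
    (hx : ∀ s : ℝ,
      HasDerivAt x (A.mulVec (x s) + Bu.mulVec (u (s - h)) + Bω.mulVec (ω s)) s)
    (τ : Fin (N + 2) → ℝ) (hτ0 : τ 0 = t - h) (hτN : τ (Fin.last (N + 1)) = t + T - h)
    (hτmono : StrictMono τ)
    (uv : Fin (N + 1) → Fin m → ℝ)
    (hu : ∀ k : Fin (N + 1), ∀ φ : ℝ, τ k.castSucc ≤ φ → φ < τ k.succ → u φ = uv k)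
    (huend : u (t + T - h) = uv (Fin.last N)) :
    x (t + T) =
      (NormedSpace.exp (T • A)).mulVec (x t)
        + (∑ k : Fin (N + 1),
            ∫ s in (τ k.castSucc + h)..(τ k.succ + h),
              (NormedSpace.exp ((t + T - s) • A) * Bu).mulVec (uv k))
        + (∑ i ∈ Finset.range (r + 1),
            (T ^ (i + 1) / (i + 1).factorial : ℝ) •
              (Gam A i T * Bω).mulVec (iteratedDeriv i ω t))
        + ∫ s in t..(t + T),
            ((t + T - s) ^ (r + 1) / (r + 1).factorial : ℝ) •
              (Gam A r (t + T - s) * Bω).mulVec (iteratedDeriv (r + 1) ω s) :=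
  stmt7_general A Bu Bω x u ω hω h t T hx τ hτ0 hτN hτmono uv hu
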